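/- Let ψ : X1 → X2 be a spectral map of spectral spaces, let φ1 : X1 → 𝒳(X1), φ2 : X2 → 𝒳(X2) be the canonical embeddings x ↦ {x}^gen, and let 𝒳(ψ) : 𝒳(X1) → 𝒳(X2) be the map C ↦ ψ(C)^gen. If Ψ : 𝒳(X1) → 𝒳(X2) is any spectral map satisfying Ψ ∘ φ1 = φ2 ∘ ψ, then 𝒳(ψ)(C) ⊆ Ψ(C) for every C ∈ 𝒳(X1). -/

import Mathlib

open Set TopologicalSpace Topology

/-- A subset of a topological space is *inverse-closed* if it is an intersection of a
family of quasi-compact open subsets. -/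
def InvClosed {X : Type*} [TopologicalSpace X] (Y : Set X) : Prop :=
  ∃ 𝒪 : Set (Set X), (∀ U ∈ 𝒪, IsOpen U ∧ IsCompact U) ∧ Y = ⋂₀ 𝒪

/-- A subset is *saturated* if it is an intersection of open sets. -/
def IsSatd {X : Type*} [TopologicalSpace X] (Y : Set X) : Prop :=
  ∃ 𝒪 : Set (Set X), (∀ U ∈ 𝒪, IsOpen U) ∧ Y = ⋂₀ 𝒪

/-- A topological space is *spectral* if it is T0, quasi-compact, sober, and the
quasi-compact open subsets form a basis closed under finite intersections. -/
def IsSpectralSpace (X : Type*) [TopologicalSpace X] : Prop :=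
  T0Space X ∧ CompactSpace X ∧ QuasiSober X ∧
    IsTopologicalBasis {U : Set X | IsOpen U ∧ IsCompact U} ∧
    ∀ U V : Set X, IsOpen U → IsCompact U → IsOpen V → IsCompact V → IsCompact (U ∩ V)

/-- `𝒳(X)`: the nonempty inverse-closed subsets of `X`. -/
abbrev XCal (X : Type*) [TopologicalSpace X] : Type _ :=
  {Y : Set X // Y.Nonempty ∧ InvClosed Y}

/-- The Zariski topology on `𝒳(X)`, with basic open sets `𝒰(Ω) = {Y : Y ⊆ Ω}` for `Ω`
quasi-compact open in `X`. -/
instance XCal.instTop (X : Type*) [TopologicalSpace X] : TopologicalSpace (XCal X) :=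
  generateFrom {S : Set (XCal X) | ∃ Ω : Set X, IsOpen Ω ∧ IsCompact Ω ∧
    S = {Y : XCal X | (Y : Set X) ⊆ Ω}}

/-- The specialization-type order: `x ≤ y` iff `y ∈ closure {x}`. -/
def spord {X : Type*} [TopologicalSpace X] (x y : X) : Prop := y ∈ closure {x}

/-- Closure under generizations of a set `S`: all points `z ≤ s` for some `s ∈ S`. -/
def genOf {X : Type*} [TopologicalSpace X] (S : Set X) : Set X :=
  {z : X | ∃ s ∈ S, spord z s}

/-- A map is *spectral* if preimages of quasi-compact open sets are quasi-compact open. -/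
def SpecMap {X Y : Type*} [TopologicalSpace X] [TopologicalSpace Y] (f : X → Y) : Prop :=
  ∀ Ω : Set Y, IsOpen Ω → IsCompact Ω → IsOpen (f ⁻¹' Ω) ∧ IsCompact (f ⁻¹' Ω)

/-- The constructible topology on a spectral space: generated by the quasi-compact open
sets together with their complements. -/
def constructibleTop (X : Type*) [TopologicalSpace X] : TopologicalSpace X :=
  generateFrom ({U : Set X | IsOpen U ∧ IsCompact U} ∪
    {S : Set X | ∃ U : Set X, IsOpen U ∧ IsCompact U ∧ S = Uᶜ})

/-- `s` is the supremum of `S` for the order induced by the topology. -/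
def IsSupOf {X : Type*} [TopologicalSpace X] (S : Set X) (s : X) : Prop :=
  (∀ c ∈ S, spord c s) ∧ ∀ t : X, (∀ c ∈ S, spord c t) → spord s t

/-- A map is sup-preserving if it sends existing finite suprema to suprema. -/
def SupPreserving {X Y : Type*} [TopologicalSpace X] [TopologicalSpace Y] (f : X → Y) : Prop :=
  ∀ F : Set X, F.Finite → ∀ s : X, IsSupOf F s → IsSupOf (f '' F) (f s)

/-- A map is open onto its image. -/
def OpenOntoImage {X Y : Type*} [TopologicalSpace X] [TopologicalSpace Y] (f : X → Y) : Prop :=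
  ∀ V : Set X, IsOpen V → ∃ W : Set Y, IsOpen W ∧ f '' V = W ∩ Set.range f


/-
Spectrality of `Ψ` makes it continuous for the Zariski topology of `𝒳`, and specialization in `𝒳(X)`
is inclusion, so `Ψ` is monotone for inclusion. For `c ∈ C` we have `{c}^gen ⊆ C`, hence
`{ψ c}^gen = Ψ({c}^gen) ⊆ Ψ(C)`; as `Ψ(C)` is closed under generization, it contains `ψ(C)^gen`.
-/

lemma isCompact_of_forall_specializes {X : Type*} [TopologicalSpace X] {t : Set X} {y : X}
    (hy : y ∈ t) (h : ∀ x ∈ t, x ⤳ y) : IsCompact t := by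
  intro f _ hft
  have hf : f ≤ 𝓝 y :=
    hft.trans <| Filter.principal_le_iff.2 fun V hV x hx => specializes_iff_pure.1 (h x hx) hV
  exact ⟨y, hy, ClusterPt.of_le_nhds hf⟩

section InvClosed

variable {X : Type*} [TopologicalSpace X]

lemma spord_iff_specializes {x y : X} : spord x y ↔ x ⤳ y := specializes_iff_mem_closure.symm

lemma mem_genOf_singleton_self (c : X) : c ∈ genOf ({c} : Set X) :=
  ⟨c, rfl, spord_iff_specializes.2 specializes_rfl⟩

lemma invClosed_of_isOpen_isCompact {Ω : Set X} (ho : IsOpen Ω) (hc : IsCompact Ω) :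
    InvClosed Ω :=
  ⟨{Ω}, by simpa using ⟨ho, hc⟩, by simp⟩

lemma InvClosed.genOf_subset {Y S : Set X} (hY : InvClosed Y) (hS : S ⊆ Y) : genOf S ⊆ Y := by
  obtain ⟨𝒪, h𝒪, rfl⟩ := hY
  rintro z ⟨s, hs, hzs⟩ U hU
  exact (spord_iff_specializes.1 hzs).mem_open (h𝒪 U hU).1 (hS hs U hU)

lemma invClosed_genOf_singleton (hB : IsTopologicalBasis {U : Set X | IsOpen U ∧ IsCompact U})
    (c : X) : InvClosed (genOf ({c} : Set X)) := by
  refine ⟨{U | IsOpen U ∧ IsCompact U ∧ c ∈ U}, fun U hU => ⟨hU.1, hU.2.1⟩, ?_⟩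
  ext z
  simp only [genOf, mem_singleton_iff, exists_eq_left, spord_iff_specializes, mem_sInter,
    mem_ofPred_eq]
  refine ⟨fun hzc U hU => hzc.mem_open hU.1 hU.2.2, fun hz => ?_⟩
  refine specializes_iff_forall_open.2 fun O hO hcO => ?_
  obtain ⟨U, ⟨hUo, hUc⟩, hcU, hUO⟩ := hB.exists_subset_of_mem_open hcO hO
  exact hUO (hz U ⟨hUo, hUc, hcU⟩)

end InvClosed

namespace XCal

variable {X : Type*} [TopologicalSpace X]

/-- The canonical embedding `φ : x ↦ {x}^gen` of `X` into `𝒳(X)`. -/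
def ofPoint (hB : IsTopologicalBasis {U : Set X | IsOpen U ∧ IsCompact U}) (c : X) : XCal X :=
  ⟨genOf {c}, ⟨c, mem_genOf_singleton_self c⟩, invClosed_genOf_singleton hB c⟩

lemma isOpen_setOf_subset {Ω : Set X} (ho : IsOpen Ω) (hc : IsCompact Ω) :
    IsOpen {Y : XCal X | (Y : Set X) ⊆ Ω} :=
  isOpen_generateFrom_of_mem ⟨Ω, ho, hc, rfl⟩

lemma specializes_of_subset {A B : XCal X} (h : (A : Set X) ⊆ B) : A ⤳ B := by
  refine specializes_iff_forall_open.2 fun O hO => ?_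
  induction hO generalizing A B with
  | basic S hS =>
    obtain ⟨Ω, -, -, rfl⟩ := hS
    exact h.trans
  | univ => exact id
  | inter S T _ _ ihS ihT => exact fun hB => ⟨ihS h hB.1, ihT h hB.2⟩
  | sUnion 𝒮 _ ih => exact fun ⟨S, hS, hB⟩ => ⟨S, hS, ih S hS h hB⟩

lemma specializes_iff_subset {A B : XCal X} : A ⤳ B ↔ (A : Set X) ⊆ B := by
  refine ⟨fun h => ?_, specializes_of_subset⟩
  obtain ⟨𝒪, h𝒪, hB⟩ := B.2.2
  rw [hB]
  refine subset_sInter fun Ω hΩ => ?_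
  exact h.mem_open (isOpen_setOf_subset (h𝒪 Ω hΩ).1 (h𝒪 Ω hΩ).2)
    (hB ▸ sInter_subset_of_mem hΩ : (B : Set X) ⊆ Ω)

/-- `𝒰(Ω)` is quasi-compact because it has the greatest element `Ω` (when `Ω ≠ ∅`). -/
lemma isCompact_setOf_subset {Ω : Set X} (ho : IsOpen Ω) (hc : IsCompact Ω) :
    IsCompact {Y : XCal X | (Y : Set X) ⊆ Ω} := by
  rcases Ω.eq_empty_or_nonempty with rfl | hne
  · convert isCompact_empty
    exact eq_empty_of_forall_notMem fun Y hY => Y.2.1.ne_empty (subset_empty_iff.1 hY)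
  · exact isCompact_of_forall_specializes (y := ⟨Ω, hne, invClosed_of_isOpen_isCompact ho hc⟩)
      (subset_refl Ω) fun Y hY => specializes_of_subset hY

lemma continuous_of_specMap {Y : Type*} [TopologicalSpace Y] {Ψ : Y → XCal X}
    (hΨ : SpecMap Ψ) : Continuous Ψ := by
  refine continuous_generateFrom_iff.2 ?_
  rintro S ⟨Ω, ho, hc, rfl⟩
  exact (hΨ _ (isOpen_setOf_subset ho hc) (isCompact_setOf_subset ho hc)).1

lemma subset_of_specMap {X' : Type*} [TopologicalSpace X'] {Ψ : XCal X' → XCal X}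
    (hΨ : SpecMap Ψ) {A B : XCal X'} (h : (A : Set X') ⊆ B) : (Ψ A : Set X) ⊆ Ψ B :=
  specializes_iff_subset.1 <| (specializes_of_subset h).map (continuous_of_specMap hΨ)

end XCal

theorem stmt13_general {X₁ X₂ : Type*} [TopologicalSpace X₁] [TopologicalSpace X₂]
    (hX₁ : IsSpectralSpace X₁)
    (ψ : X₁ → X₂)
    (Ψ : XCal X₁ → XCal X₂) (hΨ : SpecMap Ψ)
    (hcomm : ∀ (x : X₁) (C : XCal X₁),
      (C : Set X₁) = genOf {x} → (Ψ C : Set X₂) = genOf {ψ x}) :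
    ∀ C : XCal X₁, genOf (ψ '' (C : Set X₁)) ⊆ (Ψ C : Set X₂) := by
  intro C
  refine (Ψ C).2.2.genOf_subset ?_
  rintro _ ⟨c, hc, rfl⟩
  let D := XCal.ofPoint hX₁.2.2.2.1 c
  have hDC : (D : Set X₁) ⊆ C := C.2.2.genOf_subset (singleton_subset_iff.2 hc)
  have hΨD : (Ψ D : Set X₂) = genOf {ψ c} := hcomm c D rfl
  exact XCal.subset_of_specMap hΨ hDC (hΨD ▸ mem_genOf_singleton_self (ψ c))

/-- If `Ψ : 𝒳(X₁) → 𝒳(X₂)` is any spectral map with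
`Ψ ∘ φ₁ = φ₂ ∘ ψ`, then `𝒳(ψ)(C) = ψ(C)^gen ⊆ Ψ(C)` for every `C ∈ 𝒳(X₁)`. -/
theorem stmt13 {X₁ X₂ : Type*} [TopologicalSpace X₁] [TopologicalSpace X₂]
    (hX₁ : IsSpectralSpace X₁) (hX₂ : IsSpectralSpace X₂)
    (ψ : X₁ → X₂) (hψ : SpecMap ψ)
    (Ψ : XCal X₁ → XCal X₂) (hΨ : SpecMap Ψ)
    (hcomm : ∀ (x : X₁) (C : XCal X₁),
      (C : Set X₁) = genOf {x} → (Ψ C : Set X₂) = genOf {ψ x}) :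
    ∀ C : XCal X₁, genOf (ψ '' (C : Set X₁)) ⊆ (Ψ C : Set X₂) :=
  stmt13_general hX₁ ψ Ψ hΨ hcomm
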